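/- The function R(u,v) = (1/2)(u^{2H} + v^{2H} − |v−u|^{2H}) is positive semidefinite on ℝ₊ × ℝ₊, for every H ∈ (0,1); i.e., it is a valid covariance function. -/

import Mathlib

open MeasureTheory Filter Set ProbabilityTheory

noncomputable section

/-- The covariance function of fractional Brownian motion of Hurst index `H`. -/
def fbmCov (H u v : ℝ) : ℝ := (u ^ (2*H) + v ^ (2*H) - |v - u| ^ (2*H)) / 2

/-- `B` is a fractional Brownian motion of Hurst index `H` under `P`: a centered Gaussian
process with (a.s.) continuous paths on `[0,∞)` and covariance `fbmCov H`. -/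
def IsFBM {Ω : Type*} [MeasurableSpace Ω] (P : Measure Ω) (H : ℝ)
    (B : ℝ → Ω → ℝ) : Prop :=
  (∀ t : ℝ, Measurable (B t)) ∧
  (∀ᵐ ω ∂P, ContinuousOn (fun t => B t ω) (Ici 0)) ∧
  ∀ (m : ℕ) (t : Fin m → ℝ), (∀ i, 0 ≤ t i) → ∀ (c : Fin m → ℝ),
    P.map (fun ω => ∑ i, c i * B (t i) ω) =
      gaussianReal 0 (∑ i, ∑ j, c i * c j * fbmCov H (t i) (t j)).toNNReal

/-!
For `0 < α < 2` the substitution `y = |t| x` gives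
`|t| ^ α = C⁻¹ * ∫₀^∞ (1 - cos (t x)) x ^ (-1 - α) dx` with `0 < C < ∞`, and
`(1 - cos a) + (1 - cos b) - (1 - cos (b - a)) = Re ((1 - e^{ia}) * conj (1 - e^{ib}))`.
Hence `fbmCov H u v = (2C)⁻¹ ∫₀^∞ x ^ (-1 - 2H) ⟪1 - e^{iux}, 1 - e^{ivx}⟫ dx`
(the spectral representation of fractional Brownian motion), a Gram kernel, so every quadratic
form `∑ cᵢ cⱼ fbmCov H tᵢ tⱼ` is the integral of `x ^ (-1 - 2H) ‖∑ cᵢ (1 - e^{itᵢx})‖² ≥ 0`.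
-/

open Real InnerProductSpace

section OneSubCosIntegral

variable {α : ℝ}

lemma one_sub_cos_mul_mul_rpow_nonneg (α t : ℝ) {x : ℝ} (hx : 0 ≤ x) :
    0 ≤ (1 - cos (t * x)) * x ^ (-1 - α) :=
  mul_nonneg (sub_nonneg.2 (cos_le_one _)) (rpow_nonneg hx _)

lemma integrableOn_one_sub_cos_mul_rpow (hα0 : 0 < α) (hα2 : α < 2) (t : ℝ) :
    IntegrableOn (fun x => (1 - cos (t * x)) * x ^ (-1 - α)) (Ioi 0) := by
  have hmeas : AEStronglyMeasurable (fun x : ℝ => (1 - cos (t * x)) * x ^ (-1 - α))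
      (volume.restrict (Ioi 0)) :=
    (ContinuousOn.mul (by fun_prop) (continuousOn_id.rpow_const fun x hx => Or.inl (ne_of_gt hx))
      ).aestronglyMeasurable measurableSet_Ioi
  have hnorm : ∀ x : ℝ, 0 < x →
      ‖(1 - cos (t * x)) * x ^ (-1 - α)‖ = (1 - cos (t * x)) * x ^ (-1 - α) := fun x hx =>
    Real.norm_of_nonneg (one_sub_cos_mul_mul_rpow_nonneg α t hx.le)
  rw [← Ioc_union_Ioi_eq_Ioi zero_le_one]
  refine IntegrableOn.union ?_ ?_
  · have hdom : IntegrableOn (fun x : ℝ => t ^ 2 / 2 * x ^ (1 - α)) (Ioc 0 1) := by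
      have h := intervalIntegral.intervalIntegrable_rpow' (a := 0) (b := 1) (r := 1 - α)
        (by linarith)
      rw [intervalIntegrable_iff, uIoc_of_le zero_le_one] at h
      exact h.const_mul _
    refine hdom.mono' (hmeas.mono_set Ioc_subset_Ioi_self) ?_
    filter_upwards [ae_restrict_mem measurableSet_Ioc] with x hx
    rw [hnorm x hx.1, show 1 - α = 2 + (-1 - α) by ring, rpow_add hx.1, rpow_two, ← mul_assoc]
    have := one_sub_sq_div_two_le_cos (x := t * x)
    rw [mul_pow] at this
    exact mul_le_mul_of_nonneg_right (by linarith) (rpow_nonneg hx.1.le _)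
  · refine ((integrableOn_Ioi_rpow_of_lt (a := -1 - α) (by linarith) one_pos).const_mul 2).mono'
      (hmeas.mono_set (Ioi_subset_Ioi zero_le_one)) ?_
    filter_upwards [ae_restrict_mem measurableSet_Ioi] with x hx
    rw [hnorm x (one_pos.trans hx)]
    have := neg_one_le_cos (t * x)
    exact mul_le_mul_of_nonneg_right (by linarith) (rpow_nonneg (one_pos.trans hx).le _)

lemma integral_one_sub_cos_mul_rpow (hα0 : 0 < α) (t : ℝ) :
    ∫ x in Ioi 0, (1 - cos (t * x)) * x ^ (-1 - α) =
      |t| ^ α * ∫ x in Ioi 0, (1 - cos x) * x ^ (-1 - α) := by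
  have hcos : ∀ x, cos (|t| * x) = cos (t * x) := fun x => by
    rcases abs_choice t with h | h <;> simp [h, neg_mul, cos_neg]
  simp_rw [← hcos]
  rcases (abs_nonneg t).eq_or_lt with h | h
  · simp [← h, zero_rpow hα0.ne']
  set s := |t|
  have hscale := integral_comp_mul_left_Ioi (fun x => (1 - cos x) * x ^ (-1 - α)) 0 h
  have hsplit : ∀ x ∈ Ioi (0:ℝ), (1 - cos (s * x)) * (s * x) ^ (-1 - α) =
      s ^ (-1 - α) * ((1 - cos (s * x)) * x ^ (-1 - α)) := fun x hx => by
    rw [mul_rpow h.le hx.le]; ring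
  rw [setIntegral_congr_fun measurableSet_Ioi hsplit, integral_const_mul, mul_zero,
    smul_eq_mul, sub_eq_add_neg, rpow_add h, rpow_neg_one, rpow_neg h.le] at hscale
  field_simp at hscale
  exact hscale

lemma integral_one_sub_cos_mul_rpow_pos (hα0 : 0 < α) (hα2 : α < 2) :
    0 < ∫ x in Ioi 0, (1 - cos x) * x ^ (-1 - α) := by
  have hint := integrableOn_one_sub_cos_mul_rpow hα0 hα2 1
  simp only [one_mul] at hint
  rw [setIntegral_pos_iff_support_of_nonneg_ae _ hint]
  · have hsub :
        Ioo (π / 2) π ⊆ Function.support (fun x => (1 - cos x) * x ^ (-1 - α)) ∩ Ioi 0 :=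
      fun x hx => by
        have hx0 : 0 < x := (by positivity : 0 < π / 2).trans hx.1
        have hcos := cos_nonpos_of_pi_div_two_le_of_le hx.1.le (by linarith [hx.2, pi_pos])
        exact ⟨(mul_pos (by linarith) (rpow_pos_of_pos hx0 _)).ne', hx0⟩
    refine (measure_mono hsub).trans_lt' ?_
    simp [pi_pos]
  · filter_upwards [ae_restrict_mem measurableSet_Ioi] with x hx
    simpa using one_sub_cos_mul_mul_rpow_nonneg α 1 hx.le

end OneSubCosIntegral

lemma mul_inner_one_sub_exp_mul_I (w u v x : ℝ) :
    w * ⟪1 - Complex.exp (↑(u * x) * Complex.I), 1 - Complex.exp (↑(v * x) * Complex.I)⟫_ℝ =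
      (1 - cos (u * x)) * w + (1 - cos (v * x)) * w - (1 - cos ((v - u) * x)) * w := by
  have hinner : ∀ a b : ℝ, ⟪1 - Complex.exp (a * Complex.I), 1 - Complex.exp (b * Complex.I)⟫_ℝ =
      (1 - cos a) + (1 - cos b) - (1 - cos (b - a)) := fun a b => by
    simp [Complex.inner, Complex.exp_ofReal_mul_I_re, Complex.exp_ofReal_mul_I_im, cos_sub]
    ring
  rw [hinner, sub_mul v u x]
  ring

lemma sum_sum_mul_integral_inner_nonneg {X E ι : Type*} [MeasurableSpace X]
    [NormedAddCommGroup E] [InnerProductSpace ℝ E] [Fintype ι] {μ : Measure X} {w : X → ℝ}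
    (hw : 0 ≤ᵐ[μ] w) (φ : ι → X → E) (hφ : ∀ i j, Integrable (fun x => w x * ⟪φ i x, φ j x⟫_ℝ) μ)
    (c : ι → ℝ) :
    0 ≤ ∑ i, ∑ j, c i * c j * ∫ x, w x * ⟪φ i x, φ j x⟫_ℝ ∂μ := by
  have hpoint : ∀ x, ∑ i, ∑ j, c i * c j * (w x * ⟪φ i x, φ j x⟫_ℝ) =
      w x * ⟪∑ i, c i • φ i x, ∑ j, c j • φ j x⟫_ℝ := fun x => by
    rw [sum_inner, Finset.mul_sum]
    simp only [inner_sum, real_inner_smul_left, real_inner_smul_right, Finset.mul_sum]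
    exact Finset.sum_congr rfl fun i _ => Finset.sum_congr rfl fun j _ => by ring
  simp_rw [← integral_const_mul, ← integral_finsetSum _ fun j _ => (hφ _ j).const_mul _]
  rw [← integral_finsetSum _ fun i _ => integrable_finsetSum _ fun j _ => (hφ i j).const_mul _]
  simp_rw [hpoint]
  refine integral_nonneg_of_ae ?_
  filter_upwards [hw] with x hx
  exact mul_nonneg hx real_inner_self_nonneg

lemma integrableOn_rpow_mul_inner_one_sub_exp_mul_I {α : ℝ} (hα0 : 0 < α) (hα2 : α < 2)
    (u v : ℝ) :
    IntegrableOn (fun x => x ^ (-1 - α) *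
      ⟪1 - Complex.exp (↑(u * x) * Complex.I), 1 - Complex.exp (↑(v * x) * Complex.I)⟫_ℝ)
      (Ioi 0) := by
  have hint := integrableOn_one_sub_cos_mul_rpow hα0 hα2
  simp_rw [mul_inner_one_sub_exp_mul_I]
  exact ((hint u).add (hint v)).sub (hint _)

lemma rpow_add_rpow_sub_abs_sub_rpow_eq_integral_inner {α u v : ℝ} (hα0 : 0 < α) (hα2 : α < 2)
    (hu : 0 ≤ u) (hv : 0 ≤ v) :
    u ^ α + v ^ α - |v - u| ^ α = (∫ x in Ioi 0, (1 - cos x) * x ^ (-1 - α))⁻¹ *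
      ∫ x in Ioi 0, x ^ (-1 - α) *
        ⟪1 - Complex.exp (↑(u * x) * Complex.I), 1 - Complex.exp (↑(v * x) * Complex.I)⟫_ℝ := by
  have hC := integral_one_sub_cos_mul_rpow_pos hα0 hα2
  have hint := integrableOn_one_sub_cos_mul_rpow hα0 hα2
  simp_rw [mul_inner_one_sub_exp_mul_I]
  rw [integral_sub ?_ (hint _), integral_add (hint u) (hint v),
    integral_one_sub_cos_mul_rpow hα0, integral_one_sub_cos_mul_rpow hα0,
    integral_one_sub_cos_mul_rpow hα0, abs_of_nonneg hu, abs_of_nonneg hv]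
  · field_simp
  · exact (hint u).add (hint v)

theorem fbmCov_posSemidef (H : ℝ) (hH : H ∈ Ioo (0:ℝ) 1)
    (m : ℕ) (t : Fin m → ℝ) (ht : ∀ i, 0 ≤ t i) (c : Fin m → ℝ) :
    0 ≤ ∑ i, ∑ j, c i * c j * fbmCov H (t i) (t j) := by
  obtain ⟨hH0, hH1⟩ := hH
  have hα0 : 0 < 2 * H := by linarith
  have hα2 : 2 * H < 2 := by linarith
  have hC := integral_one_sub_cos_mul_rpow_pos hα0 hα2
  set C := ∫ x in Ioi 0, (1 - cos x) * x ^ (-1 - 2 * H)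
  set φ : Fin m → ℝ → ℂ := fun i x => 1 - Complex.exp (↑(t i * x) * Complex.I)
  have hrepr : ∀ i j, fbmCov H (t i) (t j) =
      (2 * C)⁻¹ * ∫ x in Ioi 0, x ^ (-1 - 2 * H) * ⟪φ i x, φ j x⟫_ℝ := fun i j => by
    rw [fbmCov, rpow_add_rpow_sub_abs_sub_rpow_eq_integral_inner hα0 hα2 (ht i) (ht j)]
    ring
  have hweight : 0 ≤ᵐ[volume.restrict (Ioi 0)] fun x : ℝ => x ^ (-1 - 2 * H) := by
    filter_upwards [ae_restrict_mem measurableSet_Ioi] with x hx using rpow_nonneg hx.le _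
  simp_rw [hrepr, mul_left_comm _ (2 * C)⁻¹, ← Finset.mul_sum]
  exact mul_nonneg (inv_pos.2 (by linarith)).le (sum_sum_mul_integral_inner_nonneg hweight φ
    (fun i j => integrableOn_rpow_mul_inner_one_sub_exp_mul_I hα0 hα2 (t i) (t j)) c)
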